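/- Let X and Y be independent absolutely continuous random variables with joint density f_{X,Y}(x,y) = f_X(x) f_Y(y). Define bivariate weighted varextropy VJ^w(X,Y) = (1/16)[∬ x² y² f_{X,Y}(x,y)³ dx dy − (∬ x y f_{X,Y}(x,y)² dx dy)²]. Then VJ^w(X,Y) = VJ^w(X)·[VJ^w(Y) + (J^w(Y))²] + (J^w(X))²·VJ^w(Y), where J^w(Z) = −(1/2)∫ z f_Z(z)² dz and VJ^w(Z) = (1/4)∫ z² f_Z(z)³ dz − (J^w(Z))². -/

import Mathlib

open MeasureTheory

/-!
Both double integrals have integrands of the form `g x * h y`, so by Fubini they factor into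
products of one-dimensional integrals. Writing `Jʷ` and `VJʷ + Jʷ²` for the rescaled factors,
`VJʷ(X,Y) = (VJʷ(X) + Jʷ(X)²)(VJʷ(Y) + Jʷ(Y)²) − Jʷ(X)² Jʷ(Y)²`, which expands to the claim.
-/

noncomputable section

def weightedExtropy (f : ℝ → ℝ) : ℝ :=
  -(1/2) * ∫ x, x * f x ^ 2

def weightedVarextropy (f : ℝ → ℝ) : ℝ :=
  (1/4) * (∫ x, x ^ 2 * f x ^ 3) - weightedExtropy f ^ 2

def bivariateWeightedVarextropy (f : ℝ × ℝ → ℝ) : ℝ :=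
  (1/16) * ((∫ p, p.1 ^ 2 * p.2 ^ 2 * f p ^ 3) - (∫ p, p.1 * p.2 * f p ^ 2) ^ 2)

end

lemma integral_prod_mul_sq_eq_weightedExtropy_mul (fX fY : ℝ → ℝ) :
    ∫ p : ℝ × ℝ, p.1 * p.2 * (fX p.1 * fY p.2) ^ 2
      = 4 * weightedExtropy fX * weightedExtropy fY := by
  calc ∫ p : ℝ × ℝ, p.1 * p.2 * (fX p.1 * fY p.2) ^ 2
      = ∫ p : ℝ × ℝ, (p.1 * fX p.1 ^ 2) * (p.2 * fY p.2 ^ 2) := by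
        congr 1 with p; ring
    _ = (∫ x, x * fX x ^ 2) * ∫ y, y * fY y ^ 2 := by
        rw [Measure.volume_eq_prod]
        exact integral_prod_mul (fun x => x * fX x ^ 2) (fun y => y * fY y ^ 2)
    _ = 4 * weightedExtropy fX * weightedExtropy fY := by
        unfold weightedExtropy; ring

lemma integral_prod_sq_mul_cube_eq_weightedVarextropy_mul (fX fY : ℝ → ℝ) :
    ∫ p : ℝ × ℝ, p.1 ^ 2 * p.2 ^ 2 * (fX p.1 * fY p.2) ^ 3
      = 16 * (weightedVarextropy fX + weightedExtropy fX ^ 2)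
          * (weightedVarextropy fY + weightedExtropy fY ^ 2) := by
  calc ∫ p : ℝ × ℝ, p.1 ^ 2 * p.2 ^ 2 * (fX p.1 * fY p.2) ^ 3
      = ∫ p : ℝ × ℝ, (p.1 ^ 2 * fX p.1 ^ 3) * (p.2 ^ 2 * fY p.2 ^ 3) := by
        congr 1 with p; ring
    _ = (∫ x, x ^ 2 * fX x ^ 3) * ∫ y, y ^ 2 * fY y ^ 3 := by
        rw [Measure.volume_eq_prod]
        exact integral_prod_mul (fun x => x ^ 2 * fX x ^ 3) (fun y => y ^ 2 * fY y ^ 3)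
    _ = 16 * (weightedVarextropy fX + weightedExtropy fX ^ 2)
          * (weightedVarextropy fY + weightedExtropy fY ^ 2) := by
        unfold weightedVarextropy; ring

theorem bivariateWeightedVarextropy_mul (fX fY : ℝ → ℝ) :
    bivariateWeightedVarextropy (fun p => fX p.1 * fY p.2)
      = weightedVarextropy fX * (weightedVarextropy fY + weightedExtropy fY ^ 2)
        + weightedExtropy fX ^ 2 * weightedVarextropy fY := by
  rw [bivariateWeightedVarextropy, integral_prod_sq_mul_cube_eq_weightedVarextropy_mul,
    integral_prod_mul_sq_eq_weightedExtropy_mul]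
  ring

theorem bivariate_weighted_varextropy_indep_general
    (fX fY : ℝ → ℝ) :
    (1/16 : ℝ) * ((∫ p : ℝ × ℝ, p.1^2 * p.2^2 * (fX p.1 * fY p.2)^3)
        - (∫ p : ℝ × ℝ, p.1 * p.2 * (fX p.1 * fY p.2)^2)^2)
    = ((1/4 : ℝ) * (∫ x : ℝ, x^2 * (fX x)^3) - (-(1/2 : ℝ) * ∫ x : ℝ, x * (fX x)^2)^2)
        * (((1/4 : ℝ) * (∫ y : ℝ, y^2 * (fY y)^3)
            - (-(1/2 : ℝ) * ∫ y : ℝ, y * (fY y)^2)^2)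
          + (-(1/2 : ℝ) * ∫ y : ℝ, y * (fY y)^2)^2)
      + (-(1/2 : ℝ) * ∫ x : ℝ, x * (fX x)^2)^2
        * ((1/4 : ℝ) * (∫ y : ℝ, y^2 * (fY y)^3)
            - (-(1/2 : ℝ) * ∫ y : ℝ, y * (fY y)^2)^2) :=
  bivariateWeightedVarextropy_mul fX fY

/-- For independent `X, Y` with joint density `f_{X,Y}(x,y) = f_X(x) f_Y(y)`,
the bivariate weighted varextropy
`VJʷ(X,Y) = (1/16)[∬ x²y² f³ − (∬ xy f²)²]` satisfies
`VJʷ(X,Y) = VJʷ(X)[VJʷ(Y) + Jʷ(Y)²] + Jʷ(X)²·VJʷ(Y)`, where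
`Jʷ(Z) = −(1/2)∫ z f_Z(z)² dz` and `VJʷ(Z) = (1/4)∫ z² f_Z(z)³ dz − Jʷ(Z)²`. -/
theorem bivariate_weighted_varextropy_indep
    (fX fY : ℝ → ℝ)
    (h1 : Integrable (fun x : ℝ => x^2 * (fX x)^3))
    (h2 : Integrable (fun x : ℝ => x * (fX x)^2))
    (h3 : Integrable (fun y : ℝ => y^2 * (fY y)^3))
    (h4 : Integrable (fun y : ℝ => y * (fY y)^2)) :
    (1/16 : ℝ) * ((∫ p : ℝ × ℝ, p.1^2 * p.2^2 * (fX p.1 * fY p.2)^3)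
        - (∫ p : ℝ × ℝ, p.1 * p.2 * (fX p.1 * fY p.2)^2)^2)
    = ((1/4 : ℝ) * (∫ x : ℝ, x^2 * (fX x)^3) - (-(1/2 : ℝ) * ∫ x : ℝ, x * (fX x)^2)^2)
        * (((1/4 : ℝ) * (∫ y : ℝ, y^2 * (fY y)^3)
            - (-(1/2 : ℝ) * ∫ y : ℝ, y * (fY y)^2)^2)
          + (-(1/2 : ℝ) * ∫ y : ℝ, y * (fY y)^2)^2)
      + (-(1/2 : ℝ) * ∫ x : ℝ, x * (fX x)^2)^2
        * ((1/4 : ℝ) * (∫ y : ℝ, y^2 * (fY y)^3)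
            - (-(1/2 : ℝ) * ∫ y : ℝ, y * (fY y)^2)^2) :=
  bivariate_weighted_varextropy_indep_general fX fY
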